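/- arXiv:1705.00454 — 4 statements merged into one kernel-verified Lean document; each statement's English description precedes it below -/
import Mathlib

section
/- Let z > 0 and let x ≥ 0 be real, and set c = −i·x/z². Then |S(c)| ≤ √5 · e^{−√x}, i.e. |sech((1−i)·√x)| ≤ √5 · e^{−√x}. -/
/-! The principal square root of `2c = -2i (√x / z)²` is `(1 - i) √x / z`, its real part being
positive, so `S(c) = sech((1 - i) √x)`. Since `(1 - i) t · i = t + t i`, one gets
`‖cosh((1 - i) t)‖² = sinh² t + cos² t`, and it remains to show `e^{2t} ≤ 5 (sinh² t + cos² t)`.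
For `t ≥ 5/4` this already holds for `5 sinh² t` because `e^{2t} ≥ 10`; for `t ≤ 5/4` the quartic
Taylor bound for `e^{2t}` and `cos t ≥ 1 - t²/2` reduce it to a polynomial inequality. -/

/-- Principal branch complex square root. -/
noncomputable def csqrt (c : ℂ) : ℂ := c ^ ((1 : ℂ) / 2)

/-- `S(c) = sech(√(2c)·z)` (principal square root). -/
noncomputable def Sf (z : ℝ) (c : ℂ) : ℂ := 1 / Complex.cosh (csqrt (2 * c) * (z : ℂ))

/-- `T(c) = tanh(√(2c)·z)/√(2c)` with `T(0) = z` (principal square root). -/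
noncomputable def Tf (z : ℝ) (c : ℂ) : ℂ :=
  if c = 0 then (z : ℂ) else Complex.tanh (csqrt (2 * c) * (z : ℂ)) / csqrt (2 * c)

open Real Complex

lemma csqrt_sq_of_re_pos {a : ℂ} (ha : 0 < a.re) : csqrt (a ^ 2) = a := by
  rw [csqrt, one_div]
  exact sq_cpow_two_inv ha

lemma csqrt_neg_two_mul_I_mul_sq {r : ℝ} (hr : 0 ≤ r) :
    csqrt (-2 * I * (r : ℂ) ^ 2) = (1 - I) * r := by
  rcases hr.eq_or_lt with rfl | hr
  · simp [csqrt]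
  · rw [← csqrt_sq_of_re_pos (a := (1 - I) * r) (by simpa using hr)]
    congr 1
    linear_combination -(r : ℂ) ^ 2 * I_sq

lemma quartic_le_exp_of_nonneg {x : ℝ} (hx : 0 ≤ x) :
    1 + x + x ^ 2 / 2 + x ^ 3 / 6 + x ^ 4 / 24 ≤ Real.exp x := by
  have h := Real.sum_le_exp_of_nonneg hx 5
  norm_num [Finset.sum_range_succ, Nat.factorial] at h
  linarith

lemma ten_le_exp_two_mul_add_twenty_mul_cos_sq {t : ℝ} (ht : 0 ≤ t) (ht' : t ≤ 5 / 4) :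
    10 ≤ Real.exp (2 * t) + 20 * Real.cos t ^ 2 := by
  have hcos : 1 - t ^ 2 / 2 ≤ Real.cos t := one_sub_sq_div_two_le_cos
  have hcos_sq : (1 - t ^ 2 / 2) ^ 2 ≤ Real.cos t ^ 2 := pow_le_pow_left₀ (by nlinarith) hcos 2
  have hexp := quartic_le_exp_of_nonneg (by linarith : 0 ≤ 2 * t)
  nlinarith [sq_nonneg (t ^ 2 - 1), sq_nonneg (t - 1)]

lemma ten_le_exp_two_mul {t : ℝ} (ht : 5 / 4 ≤ t) : 10 ≤ Real.exp (2 * t) :=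
  calc (10 : ℝ) ≤ 1 + 5 / 2 + (5 / 2) ^ 2 / 2 + (5 / 2) ^ 3 / 6 + (5 / 2) ^ 4 / 24 := by norm_num
    _ ≤ Real.exp (5 / 2) := quartic_le_exp_of_nonneg (by norm_num)
    _ ≤ Real.exp (2 * t) := Real.exp_le_exp.mpr (by linarith)

lemma exp_two_mul_le_five_mul_sinh_sq_add_cos_sq {t : ℝ} (ht : 0 ≤ t) :
    Real.exp (2 * t) ≤ 5 * (Real.sinh t ^ 2 + Real.cos t ^ 2) := by
  have hsinh : 4 * Real.sinh t ^ 2 = Real.exp (2 * t) + Real.exp (-(2 * t)) - 2 := by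
    have h := Real.cosh_two_mul t
    rw [Real.cosh_eq, Real.cosh_sq] at h
    linarith
  have hexp_neg := (Real.exp_pos (-(2 * t))).le
  rcases le_total t (5 / 4) with ht' | ht'
  · linarith [ten_le_exp_two_mul_add_twenty_mul_cos_sq ht ht']
  · linarith [ten_le_exp_two_mul ht', sq_nonneg (Real.cos t)]

lemma cosh_one_sub_I_mul (t : ℝ) :
    Complex.cosh ((1 - I) * t) =
      ↑(Real.cos t * Real.cosh t) + ↑(-(Real.sin t * Real.sinh t)) * I := by
  rw [← Complex.cos_mul_I, show (1 - I) * t * I = t + t * I by linear_combination -(t : ℂ) * I_sq,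
    Complex.cos_add_mul_I]
  push_cast
  ring

lemma norm_cosh_one_sub_I_mul_sq (t : ℝ) :
    ‖Complex.cosh ((1 - I) * t)‖ ^ 2 = Real.sinh t ^ 2 + Real.cos t ^ 2 := by
  rw [cosh_one_sub_I_mul, Complex.sq_norm, Complex.normSq_add_mul_I]
  linear_combination Real.cos t ^ 2 * Real.cosh_sq t + Real.sinh t ^ 2 * Real.sin_sq_add_cos_sq t

lemma norm_inv_cosh_one_sub_I_mul_le {t : ℝ} (ht : 0 ≤ t) :
    ‖1 / Complex.cosh ((1 - I) * t)‖ ≤ √5 * Real.exp (-t) := by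
  set A := ‖Complex.cosh ((1 - I) * t)‖
  have hA : Real.exp t ≤ √5 * A := by
    rw [← pow_le_pow_iff_left₀ (Real.exp_pos t).le (by positivity) two_ne_zero, mul_pow,
      Real.sq_sqrt (by norm_num), norm_cosh_one_sub_I_mul_sq, ← Real.exp_nat_mul]
    exact_mod_cast exp_two_mul_le_five_mul_sinh_sq_add_cos_sq ht
  have hA_pos : 0 < A := pos_of_mul_pos_right ((Real.exp_pos t).trans_le hA) (by positivity)
  rw [norm_div, norm_one, Real.exp_neg, ← div_eq_mul_inv, div_le_div_iff₀ hA_pos (Real.exp_pos t)]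
  linarith

lemma csqrt_two_mul_neg_I_mul_div_sq_mul {z x : ℝ} (hz : 0 < z) (hx : 0 ≤ x) :
    csqrt (2 * (-I * x / (z : ℂ) ^ 2)) * z = (1 - I) * √x := by
  have hz0 : (z : ℂ) ≠ 0 := by exact_mod_cast hz.ne'
  have h2c : 2 * (-I * x / (z : ℂ) ^ 2) = -2 * I * ((√x / z : ℝ) : ℂ) ^ 2 := by
    have : ((√x : ℝ) : ℂ) ^ 2 = x := by exact_mod_cast Real.sq_sqrt hx
    push_cast
    rw [div_pow, this]
    ring
  rw [h2c, csqrt_neg_two_mul_I_mul_sq (by positivity)]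
  push_cast
  field_simp

theorem S_abs_exp_bound (z x : ℝ) (hz : 0 < z) (hx : 0 ≤ x)
    (c : ℂ) (hc : c = -Complex.I * (x : ℂ) / (z : ℂ) ^ 2) :
    ‖Sf z c‖ ≤ Real.sqrt 5 * Real.exp (-Real.sqrt x) ∧
    ‖1 / Complex.cosh ((1 - Complex.I) * (Real.sqrt x : ℂ))‖ ≤
      Real.sqrt 5 * Real.exp (-Real.sqrt x) := by
  have hsech := norm_inv_cosh_one_sub_I_mul_le (Real.sqrt_nonneg x)
  refine ⟨?_, hsech⟩
  rwa [Sf, hc, csqrt_two_mul_neg_I_mul_div_sq_mul hz hx]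
end

section
/- Let z > 0 and let x > 0 be real, and set c = −i·x/z². Then T_I(c) ≥ (z/3)·min(x, 1/√x). -/
/-! With `s = √x` and `t = 2s`, the principal root is `√(2c) = (s/z)(1 - i)`, so
`T(c) = tanh(s(1 - i)) / √(2c)`, and writing `tanh(a + bi)` over the real denominator
`cosh 2a + cos 2b` gives `T_I(c) = (z/t) · (sinh t - sin t)/(cosh t + cos t)`.
Integrating `cosh t + cos t ≥ 2` three times gives `sinh t - sin t ≥ t³/3`, and `cosh t + cos t`
is increasing with value `≤ 4` at `t = 2`, so the ratio is at least `t³/12` on `[0, 2]`; for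
`t ≥ 2` the exponential dominates and the ratio is at least `2/3`. Finally
`(z/t) · min(t³/12, 2/3) = (z/3) · min(x, 1/√x)`. -/

lemma le_of_hasDerivAt_le_of_nonneg {f g f' g' : ℝ → ℝ} (hf : ∀ u, HasDerivAt f (f' u) u)
    (hg : ∀ u, HasDerivAt g (g' u) u) (h0 : f 0 ≤ g 0) (h' : ∀ u, 0 < u → f' u ≤ g' u)
    {t : ℝ} (ht : 0 ≤ t) : f t ≤ g t := by
  have hmono : MonotoneOn (g - f) (Set.Ici 0) :=
    monotoneOn_of_hasDerivWithinAt_nonneg (convex_Ici 0)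
      (fun u _ ↦ ((hg u).sub (hf u)).continuousAt.continuousWithinAt)
      (fun u _ ↦ ((hg u).sub (hf u)).hasDerivWithinAt)
      (fun u hu ↦ sub_nonneg.2 (h' u (by simpa using hu)))
  have := hmono Set.self_mem_Ici (Set.mem_Ici.2 ht) ht
  simp only [Pi.sub_apply] at this
  linarith

namespace Real

lemma sin_le_sinh {u : ℝ} (hu : 0 ≤ u) : sin u ≤ sinh u :=
  (sin_le hu).trans (self_le_sinh_iff.2 hu)

lemma monotoneOn_cosh_add_cos : MonotoneOn (fun t ↦ cosh t + cos t) (Set.Ici 0) :=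
  monotoneOn_of_hasDerivWithinAt_nonneg (convex_Ici 0) (by fun_prop)
    (fun u _ ↦ ((hasDerivAt_cosh u).add (hasDerivAt_cos u)).hasDerivWithinAt)
    (fun u hu ↦ by linarith [sin_le_sinh (interior_subset hu : u ∈ Set.Ici 0)])

lemma two_le_cosh_add_cos (t : ℝ) : 2 ≤ cosh t + cos t := by
  have := monotoneOn_cosh_add_cos Set.self_mem_Ici (abs_nonneg t) (abs_nonneg t)
  norm_num [cosh_abs, cos_abs] at this
  linarith

lemma two_mul_le_sinh_add_sin {t : ℝ} (ht : 0 ≤ t) : 2 * t ≤ sinh t + sin t :=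
  le_of_hasDerivAt_le_of_nonneg (fun u ↦ (hasDerivAt_id u).const_mul 2)
    (fun u ↦ (hasDerivAt_sinh u).add (hasDerivAt_sin u)) (by simp)
    (fun u _ ↦ by simpa using two_le_cosh_add_cos u) ht

lemma sq_le_cosh_sub_cos {t : ℝ} (ht : 0 ≤ t) : t ^ 2 ≤ cosh t - cos t :=
  le_of_hasDerivAt_le_of_nonneg (f := fun u ↦ u ^ 2) (fun u ↦ by simpa using hasDerivAt_pow 2 u)
    (fun u ↦ (hasDerivAt_cosh u).sub (hasDerivAt_cos u)) (by simp)
    (fun u hu ↦ by simpa using two_mul_le_sinh_add_sin hu.le) ht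

lemma cube_div_three_le_sinh_sub_sin {t : ℝ} (ht : 0 ≤ t) : t ^ 3 / 3 ≤ sinh t - sin t :=
  le_of_hasDerivAt_le_of_nonneg (f := fun u ↦ u ^ 3 / 3)
    (fun u ↦ by simpa using (hasDerivAt_pow 3 u).div_const 3)
    (fun u ↦ (hasDerivAt_sinh u).sub (hasDerivAt_sin u)) (by simp)
    (fun u hu ↦ by simpa using sq_le_cosh_sub_cos hu.le) ht

lemma cosh_two_add_cos_two_le : cosh 2 + cos 2 ≤ 4 := by
  have hexp : exp 2 < 7.5 := by
    rw [show (2 : ℝ) = 1 + 1 by norm_num, exp_add]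
    nlinarith [exp_one_lt_d9, exp_pos 1]
  have hinv : exp (-2) * exp 2 = 1 := by rw [← exp_add]; norm_num
  have hcos : cos 2 ≤ 0 :=
    cos_nonpos_of_pi_div_two_le_of_le (by linarith [pi_le_four]) (by linarith [pi_gt_three])
  rw [cosh_eq]
  nlinarith [add_one_le_exp 2, exp_pos (-2)]

lemma cube_div_twelve_mul_cosh_add_cos_le {t : ℝ} (h0 : 0 ≤ t) (h2 : t ≤ 2) :
    t ^ 3 / 12 * (cosh t + cos t) ≤ sinh t - sin t := by
  have hF : cosh t + cos t ≤ 4 :=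
    (monotoneOn_cosh_add_cos h0 (by norm_num : (0 : ℝ) ≤ 2) h2).trans cosh_two_add_cos_two_le
  nlinarith [cube_div_three_le_sinh_sub_sin h0, pow_nonneg h0 3]

lemma two_thirds_mul_cosh_add_cos_le {t : ℝ} (h2 : 2 ≤ t) :
    2 / 3 * (cosh t + cos t) ≤ sinh t - sin t := by
  have hinv : exp (-t) * exp t = 1 := by rw [← exp_add]; norm_num
  have hexp2 : 7.38 < exp 2 := by
    rw [show (2 : ℝ) = 1 + 1 by norm_num, exp_add]
    nlinarith [exp_one_gt_d9]
  rw [cosh_eq, sinh_eq]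
  rcases le_total t 3 with h3 | h3
  · have hcos : cos t ≤ 0 :=
      cos_nonpos_of_pi_div_two_le_of_le (by linarith [pi_le_four]) (by linarith [pi_gt_three])
    nlinarith [exp_le_exp.2 h2, sin_le_one t, exp_pos (-t)]
  · have hexp3 : exp 2 * exp 1 ≤ exp t := by rw [← exp_add]; exact exp_le_exp.2 (by linarith)
    have hE : 20 ≤ exp t := by nlinarith [exp_one_gt_d9]
    nlinarith [sin_le_one t, cos_le_one t, exp_pos (-t)]

lemma min_le_sinh_sub_sin_div_cosh_add_cos {t : ℝ} (ht : 0 ≤ t) :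
    min (t ^ 3 / 12) (2 / 3) ≤ (sinh t - sin t) / (cosh t + cos t) := by
  have hpos : 0 ≤ cosh t + cos t := by linarith [two_le_cosh_add_cos t]
  rw [le_div_iff₀ (by linarith [two_le_cosh_add_cos t])]
  rcases le_total t 2 with h2 | h2
  · exact (mul_le_mul_of_nonneg_right (min_le_left _ _) hpos).trans
      (cube_div_twelve_mul_cosh_add_cos_le ht h2)
  · exact (mul_le_mul_of_nonneg_right (min_le_right _ _) hpos).trans
      (two_thirds_mul_cosh_add_cos_le h2)

end Real

namespace Complex

open ComplexConjugate

lemma tanh_add_mul_I (a b : ℝ) :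
    tanh (a + b * I) = (Real.sinh (2 * a) + Real.sin (2 * b) * I) /
      (Real.cosh (2 * a) + Real.cos (2 * b) : ℝ) := by
  set w : ℂ := a + b * I
  have hre : 2 * (a : ℂ) = w + conj w := by simp [w, conj_ofReal]; ring
  have him : 2 * (b : ℂ) * I = w - conj w := by simp [w, conj_ofReal]; ring
  have hnum : (Real.sinh (2 * a) + Real.sin (2 * b) * I : ℂ) = 2 * sinh w * cosh (conj w) := by
    push_cast
    rw [← sinh_mul_I, hre, him, sinh_add, sinh_sub]
    ring
  have hden : ((Real.cosh (2 * a) + Real.cos (2 * b) : ℝ) : ℂ) =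
      2 * cosh w * cosh (conj w) := by
    push_cast
    rw [← cosh_mul_I, hre, him, cosh_add, cosh_sub]
    ring
  rw [hnum, hden, tanh_eq_sinh_div_cosh]
  rcases eq_or_ne (cosh w) 0 with h | h
  · simp [h]
  · rw [mul_assoc, mul_assoc, mul_div_mul_left _ _ two_ne_zero, mul_div_mul_right]
    rw [cosh_conj]
    exact (map_ne_zero _).2 h

end Complex

open Complex

lemma csqrt_sq {w : ℂ} (hw : 0 < w.re) : csqrt (w ^ 2) = w := by
  rw [csqrt, one_div]
  exact sq_cpow_two_inv hw

lemma Tf_sq_div_two {w : ℂ} (hw : 0 < w.re) (z : ℝ) : Tf z (w ^ 2 / 2) = tanh (w * z) / w := by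
  have hw0 : w ≠ 0 := fun h ↦ by simp [h] at hw
  rw [Tf, if_neg (by simpa using hw0), mul_div_cancel₀ _ two_ne_zero, csqrt_sq hw]

lemma Tf_neg_I_mul_sq_div_sq_im {z s : ℝ} (hz : 0 < z) (hs : 0 < s) :
    (Tf z (-I * (s : ℂ) ^ 2 / (z : ℂ) ^ 2)).im = z / (2 * s) *
      ((Real.sinh (2 * s) - Real.sin (2 * s)) / (Real.cosh (2 * s) + Real.cos (2 * s))) := by
  set w : ℂ := (s / z : ℝ) * (1 - I)
  have hz0 : (z : ℂ) ≠ 0 := by exact_mod_cast hz.ne'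
  have hs0 : (s : ℂ) ≠ 0 := by exact_mod_cast hs.ne'
  have hc : -I * (s : ℂ) ^ 2 / (z : ℂ) ^ 2 = w ^ 2 / 2 := by
    simp only [w]
    push_cast
    linear_combination (-(s : ℂ) ^ 2 / (z : ℂ) ^ 2 / 2) * I_sq
  have hwz : w * z = s + (-s : ℝ) * I := by
    simp only [w]
    push_cast
    field_simp
    ring
  have hwinv : w⁻¹ = ((z / (2 * s) : ℝ) : ℂ) * (1 + I) := by
    refine inv_eq_of_mul_eq_one_right ?_
    simp only [w]
    push_cast
    field_simp
    linear_combination (-1 : ℂ) * I_sq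
  have hR := (two_pos.trans_le (Real.two_le_cosh_add_cos (2 * s))).ne'
  rw [hc, Tf_sq_div_two (by simp [w]; positivity), hwz, tanh_add_mul_I, mul_neg, Real.sin_neg,
    Real.cos_neg, div_div, div_eq_mul_inv, mul_inv, ← ofReal_inv, hwinv]
  simp only [mul_im, mul_re, add_re, add_im, ofReal_re, ofReal_im, I_re, I_im, one_re, one_im]
  field_simp
  ring

theorem T_im_lower_bound (z x : ℝ) (hz : 0 < z) (hx : 0 < x)
    (c : ℂ) (hc : c = -Complex.I * (x : ℂ) / (z : ℂ) ^ 2) :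
    (z / 3) * min x (1 / Real.sqrt x) ≤ (Tf z c).im := by
  set s := Real.sqrt x
  have hs : 0 < s := Real.sqrt_pos.2 hx
  have hxs : x = s ^ 2 := (Real.sq_sqrt hx.le).symm
  rw [hc, hxs, ofReal_pow, Tf_neg_I_mul_sq_div_sq_im hz hs]
  calc z / 3 * min (s ^ 2) (1 / s) = z / (2 * s) * min ((2 * s) ^ 3 / 12) (2 / 3) := by
        rw [mul_min_of_nonneg _ _ (by positivity), mul_min_of_nonneg _ _ (by positivity)]
        congr 1
        · field_simp
          ring
        · field_simp
    _ ≤ _ := mul_le_mul_of_nonneg_left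
        (Real.min_le_sinh_sub_sin_div_cosh_add_cos (by positivity)) (by positivity)
end

section
/- Let W > 0 and let u : ℝ → ℂ be a continuous function vanishing outside a compact interval, with Fourier transform û(ν) = ∫_ℝ u(t)·e^{−2πi·ν·t} dt. Then ∫_{−W/2}^{W/2} |û(ν)|² dν ≤ ∫_ℝ ∫_ℝ u(t)·conj(u(t'))·b(t−t') dt' dt, where b(τ) = 2·W·sinc(W·τ)² and the double integral is a real number. -/
/-!
The weight `b` is the Fourier transform of the triangle `b̃ = 2 (1 - |f|/W)₊`, so Fubini turns the
double integral into `∫ b̃(f) |û(f)|² df`; this is real, and it dominates the band energy because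
`0 ≤ b̃` everywhere and `1 ≤ b̃` on `[-W/2, W/2]`. The transform of `b̃` is computed by writing it
as a multiple of the autocorrelation of the boxcar of width `W`, whose transform is `W sinc(W τ)`.
-/

open MeasureTheory

/-- Normalized sinc function. -/
noncomputable def nsinc (y : ℝ) : ℝ := if y = 0 then 1 else Real.sin (Real.pi * y) / (Real.pi * y)

open Real FourierTransform ComplexConjugate Convolution

theorem integral_fourier_mul_eq {f g : ℝ → ℂ} (hf : Integrable f) (hg : Integrable g) :
    ∫ ξ, 𝓕 f ξ * g ξ = ∫ x, f x * 𝓕 g x := by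
  simpa using! (VectorFourier.integral_fourierIntegral_smul_eq_flip (L := innerₗ ℝ)
    continuous_fourierChar continuous_inner hf hg)

theorem integral_conj_mul_fourierInv_eq {f g : ℝ → ℂ} (hf : Integrable f) (hg : Integrable g) :
    ∫ x, conj (f x) * 𝓕⁻ g x = ∫ ξ, conj (𝓕 f ξ) * g ξ := by
  have h := VectorFourier.integral_sesq_fourierIntegral_eq_neg_flip (innerSL ℂ) (L := innerₗ ℝ)
    continuous_fourierChar continuous_inner hf hg
  simp only [innerSL_apply_apply, RCLike.inner_apply, flip_innerₗ] at h
  simp_rw [mul_comm (conj _)]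
  exact h.symm

theorem MeasureTheory.Integrable.continuous_fourier {f : ℝ → ℂ} (hf : Integrable f) :
    Continuous (𝓕 f) :=
  VectorFourier.fourierIntegral_continuous continuous_fourierChar (innerSL ℝ).continuous₂ hf

theorem norm_fourier_le_integral_norm (f : ℝ → ℂ) (ξ : ℝ) : ‖𝓕 f ξ‖ ≤ ∫ x, ‖f x‖ :=
  VectorFourier.norm_fourierIntegral_le_integral_norm _ _ _ _ _

theorem fourier_const_smul (c : ℂ) (f : ℝ → ℂ) : 𝓕 (c • f) = c • 𝓕 f :=
  VectorFourier.fourierIntegral_const_smul _ _ _ _ _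

theorem fourier_sub_eq_fourierInv (g : ℝ → ℂ) (t x : ℝ) :
    𝓕 g (t - x) = 𝓕⁻ (fun ξ => 𝐞 (-(ξ * t)) • g ξ) x := by
  rw [fourier_real_eq, fourierInv_eq]
  congr 1 with ξ
  rw [smul_smul, ← AddChar.map_add_eq_mul]
  simp only [RCLike.inner_apply, conj_trivial]
  congr 2
  ring

theorem integral_conj_mul_fourier_sub {u g : ℝ → ℂ} (hu : Integrable u) (hg : Integrable g)
    (t : ℝ) : ∫ x, conj (u x) * 𝓕 g (t - x) = 𝓕 (fun ξ => conj (𝓕 u ξ) * g ξ) t := by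
  have hgt : Integrable fun ξ => 𝐞 (-(ξ * t)) • g ξ := by
    simpa [mul_comm] using (fourierIntegral_convergent_iff t).2 hg
  simp_rw [fourier_sub_eq_fourierInv g t]
  rw [integral_conj_mul_fourierInv_eq hu hgt, fourier_real_eq]
  congr 1 with ξ
  rw [Circle.smul_def, Circle.smul_def, smul_eq_mul, smul_eq_mul]
  ring

theorem MeasureTheory.Integrable.conj_fourier_mul {u g : ℝ → ℂ} (hu : Integrable u)
    (hg : Integrable g) : Integrable fun ξ => conj (𝓕 u ξ) * g ξ :=
  hg.bdd_mul hu.continuous_fourier.star.aestronglyMeasurable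
    (Filter.Eventually.of_forall fun ξ =>
      (RCLike.norm_conj _).trans_le (norm_fourier_le_integral_norm u ξ))

theorem MeasureTheory.Integrable.mul_norm_fourier_sq {g : ℝ → ℝ} {u : ℝ → ℂ}
    (hg : Integrable g) (hu : Integrable u) : Integrable fun ξ => g ξ * ‖𝓕 u ξ‖ ^ 2 :=
  hg.mul_bdd (hu.continuous_fourier.norm.pow 2).aestronglyMeasurable
    (Filter.Eventually.of_forall fun ξ => by
      rw [norm_pow, norm_norm]
      exact pow_le_pow_left₀ (norm_nonneg _) (norm_fourier_le_integral_norm u ξ) 2)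

theorem integral_integral_mul_conj_mul_fourier_sub {u g : ℝ → ℂ} (hu : Integrable u)
    (hg : Integrable g) :
    ∫ t, ∫ x, u t * conj (u x) * 𝓕 g (t - x) = ∫ ξ, g ξ * ‖𝓕 u ξ‖ ^ 2 := calc
  _ = ∫ t, u t * 𝓕 (fun ξ => conj (𝓕 u ξ) * g ξ) t := by
    simp_rw [mul_assoc, integral_const_mul, integral_conj_mul_fourier_sub hu hg]
  _ = ∫ ξ, 𝓕 u ξ * (conj (𝓕 u ξ) * g ξ) :=
    (integral_fourier_mul_eq hu (hu.conj_fourier_mul hg)).symm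
  _ = ∫ ξ, g ξ * ‖𝓕 u ξ‖ ^ 2 := by
    congr 1 with ξ
    rw [← mul_assoc, Complex.mul_conj', mul_comm]

section Triangle

theorem nsinc_eq_sinc (y : ℝ) : nsinc y = sinc (π * y) := by
  simp [nsinc, sinc, pi_ne_zero]

noncomputable def boxcar (W : ℝ) : ℝ → ℂ := (Set.Icc (-(W / 2)) (W / 2)).indicator 1

theorem integrable_boxcar (W : ℝ) : Integrable (boxcar W) :=
  (integrableOn_const measure_Icc_lt_top.ne).integrable_indicator measurableSet_Icc

theorem fourier_boxcar {W : ℝ} (hW : 0 ≤ W) (τ : ℝ) : 𝓕 (boxcar W) τ = W * nsinc (W * τ) := by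
  have hind : (fun v : ℝ => Complex.exp (↑(-2 * π * v * τ) * Complex.I) • boxcar W v) =
      (Set.Icc (-(W / 2)) (W / 2)).indicator
        fun v => Complex.exp (↑(-2 * π * τ * v) * Complex.I) := by
    ext v
    simp [boxcar, Set.indicator_apply, mul_right_comm _ (v : ℂ)]
  rw [fourier_real_eq_integral_exp_smul, hind, integral_indicator measurableSet_Icc,
    integral_Icc_eq_integral_Ioc, ← intervalIntegral.integral_of_le (by linarith)]
  rcases eq_or_ne τ 0 with rfl | hτ
  · simp [nsinc]
  have hc : -2 * π * τ ≠ 0 := by simp [pi_ne_zero, hτ]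
  have hτ' : (τ : ℂ) ≠ 0 := by exact_mod_cast hτ
  -- substitute `x = -2πτ v` to reach `∫_{-r}^{r} e^{ix} dx = 2 r sinc r` with `r = π W τ`
  rw [intervalIntegral.integral_comp_mul_left (fun x : ℝ => Complex.exp (x * Complex.I)) hc,
    intervalIntegral.integral_symm, show -2 * π * τ * -(W / 2) = π * (W * τ) by ring,
    show -2 * π * τ * (W / 2) = -(π * (W * τ)) by ring, integral_exp_mul_I_eq_sinc,
    nsinc_eq_sinc, Complex.real_smul]
  push_cast
  field_simp

theorem boxcar_convolution_boxcar (W f : ℝ) :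
    (boxcar W ⋆[ContinuousLinearMap.mul ℂ ℂ] boxcar W) f = (max (W - |f|) 0 : ℝ) := by
  have hprod : (fun s => boxcar W s * boxcar W (f - s)) =
      fun s => (Set.Icc (max (-(W / 2)) (f - W / 2)) (min (W / 2) (f + W / 2))).indicator 1 s := by
    ext s
    simp only [boxcar, Set.indicator_apply, Set.mem_Icc, Pi.one_apply]
    split_ifs <;> grind
  rw [convolution_def]
  simp only [ContinuousLinearMap.mul_apply']
  rw [hprod, integral_indicator measurableSet_Icc]
  simp only [Pi.one_apply]
  rw [setIntegral_const, volume_real_Icc, Complex.real_smul, mul_one]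
  congr 2
  rcases le_total 0 f with hf | hf
  · rw [abs_of_nonneg hf, max_eq_right (by linarith), min_eq_left (by linarith)]; ring
  · rw [abs_of_nonpos hf, max_eq_left (by linarith), min_eq_right (by linarith)]; ring

noncomputable def triangle (W f : ℝ) : ℝ := 2 * max (1 - |f| / W) 0

theorem triangle_nonneg (W f : ℝ) : 0 ≤ triangle W f :=
  mul_nonneg zero_le_two (le_max_right _ _)

variable {W : ℝ}

theorem one_le_triangle (hW : 0 < W) {f : ℝ} (hf : |f| ≤ W / 2) : 1 ≤ triangle W f := by
  have : |f| / W ≤ 1 / 2 := by rw [div_le_iff₀ hW]; linarith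
  have : 1 / 2 ≤ max (1 - |f| / W) 0 := le_max_of_le_left (by linarith)
  unfold triangle
  linarith

theorem ofReal_triangle_eq_convolution (hW : 0 < W) :
    (fun f => (triangle W f : ℂ)) =
      ((2 / W : ℂ) • boxcar W) ⋆[ContinuousLinearMap.mul ℂ ℂ] boxcar W := by
  ext f
  have : max (1 - |f| / W) 0 = max (W - |f|) 0 / W := by
    rw [← max_div_div_right hW.le, zero_div, sub_div, div_self hW.ne']
  rw [smul_convolution, Pi.smul_apply, boxcar_convolution_boxcar, triangle, this]
  push_cast
  ring

theorem integrable_triangle (hW : 0 < W) : Integrable (triangle W) := by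
  have h := ((integrable_boxcar W).smul (2 / W : ℂ)).integrable_convolution
    (ContinuousLinearMap.mul ℂ ℂ) (integrable_boxcar W)
  rw [← ofReal_triangle_eq_convolution hW] at h
  simpa using h.re

theorem fourier_triangle (hW : 0 < W) (τ : ℝ) :
    𝓕 (fun f => (triangle W f : ℂ)) τ = ((2 * W * nsinc (W * τ) ^ 2 : ℝ) : ℂ) := by
  rw [ofReal_triangle_eq_convolution hW, fourier_mul_convolution_eq
    ((integrable_boxcar W).smul _) (integrable_boxcar W)]
  rw [fourier_const_smul, Pi.smul_apply, smul_eq_mul, fourier_boxcar hW.le]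
  have : (W : ℂ) ≠ 0 := by exact_mod_cast hW.ne'
  push_cast
  field_simp

end Triangle

theorem intervalIntegral_le_integral_mul_of_one_le {w φ : ℝ → ℝ} {a b : ℝ} (hab : a ≤ b)
    (hw : ∀ x ∈ Set.Ioc a b, 1 ≤ w x) (hw0 : 0 ≤ w) (hφ : 0 ≤ φ)
    (hwφ : Integrable fun x => w x * φ x) : ∫ x in a..b, φ x ≤ ∫ x, w x * φ x := by
  rw [intervalIntegral.integral_of_le hab, ← integral_indicator measurableSet_Ioc]
  refine integral_mono_of_nonneg (Filter.Eventually.of_forall fun x =>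
    Set.indicator_nonneg (fun x _ => hφ x) x) hwφ (Filter.Eventually.of_forall fun x => ?_)
  by_cases hx : x ∈ Set.Ioc a b
  · rw [Set.indicator_of_mem hx]
    exact le_mul_of_one_le_left (hφ x) (hw x hx)
  · rw [Set.indicator_of_notMem hx]
    exact mul_nonneg (hw0 x) (hφ x)

theorem bandlimited_power_bound (W : ℝ) (hW : 0 < W)
    (u : ℝ → ℂ) (hu : Continuous u) (hsupp : HasCompactSupport u)
    (uhat : ℝ → ℂ)
    (huhat : ∀ ν : ℝ, uhat ν =
      ∫ t : ℝ, u t * Complex.exp (-2 * Real.pi * Complex.I * (ν : ℂ) * (t : ℂ))) :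
    (∫ t : ℝ, ∫ t' : ℝ,
        u t * (starRingEnd ℂ) (u t') * ((2 * W * nsinc (W * (t - t')) ^ 2 : ℝ) : ℂ)).im = 0 ∧
    (∫ ν in (-(W / 2))..(W / 2), ‖uhat ν‖ ^ 2) ≤
      (∫ t : ℝ, ∫ t' : ℝ,
        u t * (starRingEnd ℂ) (u t') * ((2 * W * nsinc (W * (t - t')) ^ 2 : ℝ) : ℂ)).re := by
  have hu_int : Integrable u := hu.integrable_of_hasCompactSupport hsupp
  have huhat_eq : uhat = 𝓕 u := funext fun ν => by
    rw [huhat, fourier_real_eq_integral_exp_smul]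
    congr 1 with t
    rw [smul_eq_mul, mul_comm]
    congr 2
    push_cast
    ring
  subst huhat_eq
  have hquad : (∫ t : ℝ, ∫ t' : ℝ,
        u t * (starRingEnd ℂ) (u t') * ((2 * W * nsinc (W * (t - t')) ^ 2 : ℝ) : ℂ)) =
      ((∫ ν, triangle W ν * ‖𝓕 u ν‖ ^ 2 : ℝ) : ℂ) := by
    simp_rw [← fourier_triangle hW]
    rw [integral_integral_mul_conj_mul_fourier_sub (g := fun f => (triangle W f : ℂ)) hu_int
      (integrable_triangle hW).ofReal, ← integral_complex_ofReal]
    norm_cast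
  refine ⟨by rw [hquad, Complex.ofReal_im], ?_⟩
  rw [hquad, Complex.ofReal_re]
  exact intervalIntegral_le_integral_mul_of_one_le (by linarith)
    (fun ν hν => one_le_triangle hW (abs_le.2 ⟨hν.1.le, hν.2⟩)) (triangle_nonneg W)
    (fun ν => by positivity) ((integrable_triangle hW).mul_norm_fourier_sq hu_int)
end

section
/- Let a, b ∈ ℂ and z > 0. Then the limit as c → 0 through nonzero complex values of (a²/2 − b²/(4c))·T(c) + (a·b/(2c))·(1 − S(c)) + (b²/(4c))·z exists and equals (z/2)·(a² + a·b·z + (b²/3)·z²). -/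
/-!
Put `u = √(2c)·z`, so that `u² = 2cz²` (the branch of the root plays no role) and `u → 0`
through nonzero values. The expression becomes
`(a²z/2)·tanh u/u + abz²·(1 - sech u)/u² + (b²z³/2)·(u - tanh u)/u³`,
and the three quotients tend to `1`, `1/2` and `1/3` by the third-order Taylor expansion of `exp`.
-/

open Complex Filter Topology Asymptotics

lemma exp_sub_taylor_isLittleO_pow_three :
    (fun u : ℂ => exp u - (1 + u + u ^ 2 / 2 + u ^ 3 / 6)) =o[𝓝 0] (· ^ 3) :=
  (exp_sub_sum_range_succ_isLittleO_pow 3).congr_left fun u => by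
    simp [Finset.sum_range_succ, Nat.factorial]

lemma exp_neg_sub_taylor_isLittleO_pow_three :
    (fun u : ℂ => exp (-u) - (1 - u + u ^ 2 / 2 - u ^ 3 / 6)) =o[𝓝 0] (· ^ 3) := by
  have h := exp_sub_taylor_isLittleO_pow_three.comp_tendsto
    (continuous_neg.tendsto' (0 : ℂ) 0 neg_zero)
  refine (isLittleO_neg_right.mp (h.congr_right fun u => ?_)).congr_left fun u => ?_
  · simp [Odd.neg_pow (by decide : Odd 3)]
  · simp only [Function.comp_apply]; ring

lemma sinh_sub_taylor_isLittleO_pow_three :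
    (fun u : ℂ => sinh u - u - 1 / 6 * u ^ 3) =o[𝓝 0] (· ^ 3) :=
  ((exp_sub_taylor_isLittleO_pow_three.sub exp_neg_sub_taylor_isLittleO_pow_three).const_mul_left
    (1 / 2)).congr_left fun u => by rw [sinh]; ring

lemma cosh_sub_taylor_isLittleO_pow_two :
    (fun u : ℂ => cosh u - 1 - 1 / 2 * u ^ 2) =o[𝓝 0] (· ^ 2) :=
  (((exp_sub_taylor_isLittleO_pow_three.add exp_neg_sub_taylor_isLittleO_pow_three).const_mul_left
    (1 / 2)).trans (isLittleO_pow_pow (by norm_num))).congr_left fun u => by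
    rw [cosh]; ring

lemma tendsto_div_pow_of_sub_isLittleO {𝕜 : Type*} [NormedField 𝕜] {f : 𝕜 → 𝕜} {c : 𝕜}
    {n : ℕ} (h : (fun u => f u - c * u ^ n) =o[𝓝 0] (· ^ n)) :
    Tendsto (fun u => f u / u ^ n) (𝓝[≠] 0) (𝓝 c) := by
  have := ((h.tendsto_div_nhds_zero.mono_left (nhdsWithin_le_nhds (s := {0}ᶜ))).const_add c)
  rw [add_zero] at this
  refine this.congr' ?_
  filter_upwards [self_mem_nhdsWithin] with u (hu : u ≠ 0)
  field_simp
  ring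

lemma tendsto_sinh_sub_self_div_pow_three :
    Tendsto (fun u : ℂ => (sinh u - u) / u ^ 3) (𝓝[≠] 0) (𝓝 (1 / 6)) :=
  tendsto_div_pow_of_sub_isLittleO sinh_sub_taylor_isLittleO_pow_three

lemma tendsto_cosh_sub_one_div_sq :
    Tendsto (fun u : ℂ => (cosh u - 1) / u ^ 2) (𝓝[≠] 0) (𝓝 (1 / 2)) :=
  tendsto_div_pow_of_sub_isLittleO cosh_sub_taylor_isLittleO_pow_two

lemma tendsto_cosh_nhdsNE_zero : Tendsto cosh (𝓝[≠] 0) (𝓝 1) := by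
  simpa using continuous_cosh.continuousAt.tendsto.mono_left (nhdsWithin_le_nhds (a := (0 : ℂ)))

lemma tendsto_tanh_div_self : Tendsto (fun u : ℂ => tanh u / u) (𝓝[≠] 0) (𝓝 1) := by
  have hid : Tendsto (fun u : ℂ => u) (𝓝[≠] 0) (𝓝 0) := nhdsWithin_le_nhds
  have h := ((hid.pow 2).mul tendsto_sinh_sub_self_div_pow_three).const_add 1
  refine ((h.div tendsto_cosh_nhdsNE_zero one_ne_zero).congr' ?_).trans (by norm_num)
  filter_upwards [self_mem_nhdsWithin] with u (hu : u ≠ 0)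
  simp only [Pi.div_apply, tanh_eq_sinh_div_cosh]
  field_simp
  ring

lemma tendsto_self_sub_tanh_div_pow_three :
    Tendsto (fun u : ℂ => (u - tanh u) / u ^ 3) (𝓝[≠] 0) (𝓝 (1 / 3)) := by
  have h := (tendsto_cosh_sub_one_div_sq.sub tendsto_sinh_sub_self_div_pow_three).div
    tendsto_cosh_nhdsNE_zero one_ne_zero
  refine (h.congr' ?_).trans (by norm_num)
  filter_upwards [self_mem_nhdsWithin, tendsto_cosh_nhdsNE_zero.eventually_ne one_ne_zero]
    with u (hu : u ≠ 0) hcosh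
  simp only [Pi.div_apply, tanh_eq_sinh_div_cosh]
  field_simp
  ring

lemma tendsto_one_sub_one_div_cosh_div_sq :
    Tendsto (fun u : ℂ => (1 - 1 / cosh u) / u ^ 2) (𝓝[≠] 0) (𝓝 (1 / 2)) := by
  refine ((tendsto_cosh_sub_one_div_sq.div tendsto_cosh_nhdsNE_zero one_ne_zero).congr' ?_).trans
    (by norm_num)
  filter_upwards [tendsto_cosh_nhdsNE_zero.eventually_ne one_ne_zero] with u hcosh
  simp only [Pi.div_apply]
  field_simp

lemma csqrt_sq_s19 (c : ℂ) : csqrt c ^ 2 = c := by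
  rw [csqrt, one_div, cpow_ofNat_inv_pow]

lemma csqrt_ne_zero {c : ℂ} (hc : c ≠ 0) : csqrt c ≠ 0 := fun h => hc <| by
  rw [← csqrt_sq_s19 c, h, zero_pow two_ne_zero]

lemma tendsto_csqrt_zero : Tendsto csqrt (𝓝 0) (𝓝 0) := by
  have h := (continuousAt_cpow_const_of_re_pos (z := 0) (w := 1 / 2) (by simp)
    (by norm_num)).tendsto
  rwa [zero_cpow (by norm_num)] at h

lemma tendsto_csqrt_two_mul_mul_nhdsNE {z : ℂ} (hz : z ≠ 0) :
    Tendsto (fun c : ℂ => csqrt (2 * c) * z) (𝓝[≠] 0) (𝓝[≠] 0) := by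
  refine tendsto_nhdsWithin_of_tendsto_nhds_of_eventually_within _ ?_ ?_
  · have h := (tendsto_csqrt_zero.comp ((continuous_const_mul (2 : ℂ)).tendsto' 0 0
      (mul_zero 2))).mul_const z
    rw [zero_mul] at h
    exact h.mono_left nhdsWithin_le_nhds
  · filter_upwards [self_mem_nhdsWithin] with c (hc : c ≠ 0)
    exact mul_ne_zero (csqrt_ne_zero (mul_ne_zero two_ne_zero hc)) hz

lemma tendsto_tanh_sech_combination (a b z : ℂ) :
    Tendsto (fun u : ℂ => a ^ 2 * z / 2 * (tanh u / u) + a * b * z ^ 2 * ((1 - 1 / cosh u) / u ^ 2)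
        + b ^ 2 * z ^ 3 / 2 * ((u - tanh u) / u ^ 3))
      (𝓝[≠] 0) (𝓝 (z / 2 * (a ^ 2 + a * b * z + b ^ 2 / 3 * z ^ 2))) := by
  convert ((tendsto_tanh_div_self.const_mul _).add
    (tendsto_one_sub_one_div_cosh_div_sq.const_mul _)).add
    (tendsto_self_sub_tanh_div_pow_three.const_mul _) using 2
  ring

theorem mecozzi_exponent_limit (a b : ℂ) (z : ℝ) (hz : 0 < z) :
    Filter.Tendsto
      (fun c : ℂ => (a ^ 2 / 2 - b ^ 2 / (4 * c)) * Tf z c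
        + (a * b / (2 * c)) * (1 - Sf z c) + (b ^ 2 / (4 * c)) * (z : ℂ))
      (nhdsWithin 0 {(0 : ℂ)}ᶜ)
      (nhds (((z : ℂ) / 2) * (a ^ 2 + a * b * (z : ℂ) + (b ^ 2 / 3) * (z : ℂ) ^ 2))) := by
  have hz0 : (z : ℂ) ≠ 0 := by exact_mod_cast hz.ne'
  refine ((tendsto_tanh_sech_combination a b z).comp (tendsto_csqrt_two_mul_mul_nhdsNE hz0)).congr' ?_
  filter_upwards [self_mem_nhdsWithin] with c (hc : c ≠ 0)
  have hs := csqrt_ne_zero (mul_ne_zero two_ne_zero hc)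
  have hc_eq : c = csqrt (2 * c) ^ 2 / 2 := by rw [csqrt_sq_s19]; ring
  simp only [Function.comp_apply, Tf, Sf, if_neg hc]
  generalize csqrt (2 * c) = s at hs hc_eq ⊢
  subst hc_eq
  field_simp
  ring
end
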